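/- For every subgroup V of Q = ℤ² ⋊ ℤ/4 isomorphic to D∞, the subgroup V_max := ⟨v₂, (V ∩ ℤ²)_max⟩ (with v₂ ∈ V any element of order two and (V∩ℤ²)_max the maximal infinite cyclic subgroup of ℤ² containing V∩ℤ²) is independent of the choice of v₂, is isomorphic to D∞, contains V, and is the unique maximal virtually cyclic subgroup of Q containing V among subgroups isomorphic to D∞; furthermore if V ⊆ W with W virtually cyclic then W ≅ D∞ and V_max = W_max. -/

import Mathlib

open SemidirectProduct

/-- The automorphism of `ℤ²` given by multiplication by `i`: `(a,b) ↦ (-b,a)`. -/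
def J : (ℤ × ℤ) ≃+ (ℤ × ℤ) where
  toFun p := (-p.2, p.1)
  invFun p := (p.2, -p.1)
  left_inv p := by simp
  right_inv p := by simp
  map_add' p q := by simp [Prod.ext_iff]; ring

abbrev Z2 := Multiplicative (ℤ × ℤ)

def Jm : MulAut Z2 := AddEquiv.toMultiplicative J

lemma Jm_pow_four : Jm ^ 4 = 1 := by
  refine MulEquiv.ext fun x => ?_
  show Jm (Jm (Jm (Jm x))) = x
  simp [Jm, J, AddEquiv.toMultiplicative, Prod.ext_iff]

lemma Jm_pow_mod (n : ℕ) : Jm ^ (n % 4) = Jm ^ n := by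
  conv_rhs => rw [← Nat.div_add_mod n 4]
  rw [pow_add, pow_mul, Jm_pow_four, one_pow, one_mul]

/-- The action of `ℤ/4` on `ℤ²` by powers of multiplication by `i`. -/
def phiQ : Multiplicative (ZMod 4) →* MulAut Z2 where
  toFun s := Jm ^ (Multiplicative.toAdd s).val
  map_one' := by
    show Jm ^ (0 : ZMod 4).val = 1
    simp
  map_mul' a b := by
    show Jm ^ ((Multiplicative.toAdd a + Multiplicative.toAdd b : ZMod 4)).val = _
    rw [ZMod.val_add, Jm_pow_mod, pow_add]

/-- `Q = ℤ² ⋊ ℤ/4`. -/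
abbrev Q := Z2 ⋊[phiQ] Multiplicative (ZMod 4)

/-- The generator `t` of the `ℤ/4`-factor of `Q`. -/
def tQ : Q := inr (Multiplicative.ofAdd (1 : ZMod 4))

/-- The inclusion `ℤ² → Q`. -/
def ιQ (x : ℤ × ℤ) : Q := inl (Multiplicative.ofAdd x)

/-- A group is virtually cyclic if it has a cyclic subgroup of finite index. -/
def VirtuallyCyclic (V : Type*) [Group V] : Prop :=
  ∃ H : Subgroup V, IsCyclic H ∧ H.index ≠ 0

/-!
Every virtually cyclic `U ≤ Q` has a lattice `U ∩ ℤ²` of rank at most one: any two of its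
elements have commensurable multiples. If this lattice contains some `c ≠ 0`, then `U` has no
element of rotation part `t^{±1}`, since conjugation by it would put `J c`, which is never
commensurable with `c`, into the lattice. So `U` consists of translations and half-turns, and
`U = ⟨h, U ∩ ℤ²⟩` for any half-turn `h ∈ U`.

`V ≅ D∞` is virtually cyclic and infinite, so its lattice contains some `c ≠ 0`, and it contains
a half-turn `h`, the image of a reflection. The saturation `(V ∩ ℤ²)_max` still has rank one,
hence is infinite cyclic, and `V_max = ⟨h, (V ∩ ℤ²)_max⟩ ≅ D∞`. For a virtually cyclic `U ⊇ V`,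
the lattice `U ∩ ℤ²` is infinite cyclic and commensurable with `c`, so `U = ⟨h, U ∩ ℤ²⟩ ≅ D∞`
and `U ∩ ℤ² ≤ (V ∩ ℤ²)_max`, i.e. `U ≤ V_max`.
-/

open DihedralGroup

namespace AddSubgroup

variable {M : Type*} [AddCommGroup M]

/-- For `A = V ∩ ℤ²` this is the paper's `(V ∩ ℤ²)_max`. -/
def saturation (A : AddSubgroup M) : AddSubgroup M where
  carrier := {x | ∃ n : ℤ, n ≠ 0 ∧ n • x ∈ A}
  zero_mem' := ⟨1, one_ne_zero, by simp⟩
  add_mem' := by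
    rintro x y ⟨n, hn, hx⟩ ⟨m, hm, hy⟩
    refine ⟨m * n, mul_ne_zero hm hn, ?_⟩
    rw [smul_add, mul_smul, mul_comm, mul_smul]
    exact add_mem (A.zsmul_mem hx m) (A.zsmul_mem hy n)
  neg_mem' := by
    rintro x ⟨n, hn, hx⟩
    exact ⟨n, hn, by rw [smul_neg]; exact neg_mem hx⟩

lemma le_saturation (A : AddSubgroup M) : A ≤ saturation A :=
  fun x hx => ⟨1, one_ne_zero, by rwa [one_smul]⟩

def PairwiseDependent (A : AddSubgroup M) : Prop :=
  ∀ a ∈ A, ∀ b ∈ A, b ≠ 0 → ∃ i j : ℤ, j ≠ 0 ∧ j • a = i • b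

lemma PairwiseDependent.le_saturation {A B : AddSubgroup M} (hA : PairwiseDependent A)
    {c : M} (hcA : c ∈ A) (hcB : c ∈ B) (hc : c ≠ 0) : A ≤ saturation B := by
  intro a ha
  obtain ⟨i, j, hj, hij⟩ := hA a ha c hcA hc
  exact ⟨j, hj, hij ▸ B.zsmul_mem hcB i⟩

lemma PairwiseDependent.saturation [IsAddTorsionFree M] {A : AddSubgroup M}
    (hA : PairwiseDependent A) : PairwiseDependent (saturation A) := by
  rintro a ⟨n, hn, ha⟩ b ⟨m, hm, hb⟩ hb0
  obtain ⟨i, j, hj, hij⟩ := hA _ ha _ hb (smul_ne_zero hm hb0)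
  refine ⟨i * m, j * n, mul_ne_zero hj hn, ?_⟩
  rw [mul_smul, mul_smul, hij]

lemma PairwiseDependent.exists_zmultiples_eq {A : AddSubgroup (ℤ × ℤ)}
    (hA : PairwiseDependent A) : ∃ c, AddSubgroup.zmultiples c = A := by
  obtain hbot | ⟨a, haA, ha⟩ := A.bot_or_exists_ne_zero
  · exact ⟨0, by rw [hbot, AddSubgroup.zmultiples_zero_eq_bot]⟩
  -- the inner product with `a` is injective on `A`, so `A` embeds into `ℤ`
  let l : ℤ × ℤ →+ ℤ := AddMonoidHom.mk' (fun x => a.1 * x.1 + a.2 * x.2)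
    (by intros; simp only [Prod.fst_add, Prod.snd_add]; ring)
  have hla : l a ≠ 0 := by
    change a.1 * a.1 + a.2 * a.2 ≠ 0
    contrapose! ha
    have h₁ : a.1 = 0 := by nlinarith [mul_self_nonneg a.1, mul_self_nonneg a.2]
    have h₂ : a.2 = 0 := by nlinarith [mul_self_nonneg a.1, mul_self_nonneg a.2]
    exact Prod.ext h₁ h₂
  have hinj : Function.Injective (l.comp A.subtype) := by
    refine (injective_iff_map_eq_zero _).mpr fun ⟨x, hx⟩ hlx => Subtype.ext ?_
    replace hlx : l x = 0 := hlx
    obtain ⟨i, j, hj, hij⟩ := hA x hx a haA ha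
    have hi : i * l a = 0 := by
      rw [← smul_eq_mul, ← map_zsmul, ← hij, map_zsmul, hlx, smul_zero]
    rw [(mul_eq_zero.mp hi).resolve_right hla, zero_smul] at hij
    exact (smul_eq_zero.mp hij).resolve_left hj
  have : IsAddCyclic A := isAddCyclic_of_injective _ hinj
  exact A.isAddCyclic_iff_exists_zmultiples_eq_top.mp this

lemma PairwiseDependent.J_notMem {A : AddSubgroup (ℤ × ℤ)} (hA : PairwiseDependent A)
    {c : ℤ × ℤ} (hcA : c ∈ A) (hc : c ≠ 0) : J c ∉ A := by
  intro hJ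
  obtain ⟨i, j, hj, hij⟩ := hA _ hJ c hcA hc
  obtain ⟨c₁, c₂⟩ := c
  simp only [J, AddEquiv.coe_mk, Equiv.coe_fn_mk, Prod.smul_mk, smul_eq_mul,
    Prod.mk.injEq] at hij
  have hij2 : i ^ 2 + j ^ 2 ≠ 0 := by positivity
  have h₁ : (i ^ 2 + j ^ 2) * c₁ = 0 := by linear_combination j * hij.2 - i * hij.1
  have h₂ : (i ^ 2 + j ^ 2) * c₂ = 0 := by linear_combination -j * hij.1 - i * hij.2
  simp_all

end AddSubgroup

open AddSubgroup

section VirtuallyCyclic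

variable {G H : Type*} [Group G] [Group H]

lemma VirtuallyCyclic.of_mulEquiv (hG : VirtuallyCyclic G) (e : G ≃* H) : VirtuallyCyclic H := by
  obtain ⟨K, hK, hKi⟩ := hG
  exact ⟨K.map (e : G →* H),
    isCyclic_of_surjective (K.equivMapOfInjective _ e.injective) (MulEquiv.surjective _),
    by rwa [Subgroup.index_map_equiv]⟩

lemma VirtuallyCyclic.exists_forall_pow_mem_zpowers (hG : VirtuallyCyclic G) :
    ∃ g : G, ∀ a : G, ∃ n : ℕ, 0 < n ∧ a ^ n ∈ Subgroup.zpowers g := by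
  obtain ⟨K, hK, hKi⟩ := hG
  obtain ⟨g, hg⟩ := hK.exists_generator
  refine ⟨g, fun a => ?_⟩
  obtain ⟨n, hn, -, han⟩ := Subgroup.exists_pow_mem_of_index_ne_zero hKi a
  obtain ⟨k, hk⟩ := Subgroup.mem_zpowers_iff.mp (hg ⟨_, han⟩)
  exact ⟨n, hn, k, by simpa using congrArg Subtype.val hk⟩

end VirtuallyCyclic

lemma virtuallyCyclic_dihedralGroup_zero : VirtuallyCyclic (DihedralGroup 0) := by
  have hmem : ∀ g : DihedralGroup 0, g ∈ Subgroup.zpowers (r 1) ↔ ∃ i, g = r i := by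
    intro g
    simp only [Subgroup.mem_zpowers_iff, r_one_zpow]
    constructor
    · rintro ⟨k, rfl⟩; exact ⟨_, rfl⟩
    · rintro ⟨i, rfl⟩; exact ⟨i, rfl⟩
  refine ⟨Subgroup.zpowers (r 1), inferInstance, ?_⟩
  rw [Subgroup.index_eq_two_iff.mpr ⟨sr 0, ?_⟩]
  · norm_num
  rintro (i | i) <;> simp [hmem, r_mul_sr, sr_mul_sr]

/-- The element `(w, t²)`, which acts on `ℤ²` as the half-turn `x ↦ w - x`. -/
def halfTurn (w : ℤ × ℤ) : Q := ⟨Multiplicative.ofAdd w, Multiplicative.ofAdd 2⟩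

@[simp] lemma ιQ_left (x : ℤ × ℤ) : (ιQ x).left = Multiplicative.ofAdd x := rfl
@[simp] lemma ιQ_right (x : ℤ × ℤ) : (ιQ x).right = 1 := rfl
@[simp] lemma halfTurn_left (w : ℤ × ℤ) : (halfTurn w).left = Multiplicative.ofAdd w := rfl
@[simp] lemma halfTurn_right (w : ℤ × ℤ) : (halfTurn w).right = Multiplicative.ofAdd 2 := rfl

lemma phiQ_one_apply (x : ℤ × ℤ) :
    phiQ (Multiplicative.ofAdd 1) (Multiplicative.ofAdd x) = Multiplicative.ofAdd (J x) := rfl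

@[simp] lemma phiQ_two_apply (x : ℤ × ℤ) :
    phiQ (Multiplicative.ofAdd 2) (Multiplicative.ofAdd x) = Multiplicative.ofAdd (-x) := by
  show Jm (Jm _) = _
  ext <;> simp [Jm, J]

lemma phiQ_three_apply (x : ℤ × ℤ) :
    phiQ (Multiplicative.ofAdd 3) (Multiplicative.ofAdd x) = Multiplicative.ofAdd (-J x) := by
  show Jm (Jm (Jm _)) = _
  ext <;> simp [Jm, J]

lemma ιQ_add (x y : ℤ × ℤ) : ιQ (x + y) = ιQ x * ιQ y := by
  simp [ιQ]

lemma ιQ_zsmul (n : ℤ) (x : ℤ × ℤ) : ιQ (n • x) = ιQ x ^ n := by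
  rw [ιQ, ofAdd_zsmul, map_zpow, ιQ]

lemma ιQ_mul_halfTurn (x w : ℤ × ℤ) : ιQ x * halfTurn w = halfTurn (x + w) := by
  ext <;> simp [ιQ]

lemma halfTurn_mul_ιQ (w x : ℤ × ℤ) : halfTurn w * ιQ x = halfTurn (w - x) := by
  ext <;> simp [sub_eq_add_neg]

lemma halfTurn_mul_halfTurn (w u : ℤ × ℤ) : halfTurn w * halfTurn u = ιQ (w - u) := by
  refine SemidirectProduct.ext ?_ ?_
  · simp [sub_eq_add_neg]
  · show Multiplicative.ofAdd (2 : ZMod 4) * Multiplicative.ofAdd 2 = 1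
    decide

lemma ιQ_zero : ιQ 0 = 1 := by simp [ιQ]

lemma ιQ_neg (x : ℤ × ℤ) : ιQ (-x) = (ιQ x)⁻¹ := by simp [ιQ]

lemma ιQ_injective : Function.Injective ιQ :=
  fun _ _ h => Multiplicative.ofAdd.injective (congrArg SemidirectProduct.left h)

lemma halfTurn_injective : Function.Injective halfTurn :=
  fun _ _ h => Multiplicative.ofAdd.injective (congrArg SemidirectProduct.left h)

lemma ιQ_ne_halfTurn (x w : ℤ × ℤ) : ιQ x ≠ halfTurn w := fun h =>
  absurd (congrArg SemidirectProduct.right h) (by rw [ιQ_right, halfTurn_right]; decide)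

lemma halfTurn_inv (w : ℤ × ℤ) : (halfTurn w)⁻¹ = halfTurn w :=
  inv_eq_of_mul_eq_one_right (by rw [halfTurn_mul_halfTurn, sub_self, ιQ_zero])

lemma mul_ιQ_mul_inv (q : Q) (x : ℤ × ℤ) :
    q * ιQ x * q⁻¹ = inl (phiQ q.right (Multiplicative.ofAdd x)) := by
  ext <;> simp [ιQ]

/-- `U ∩ ℤ²`, as a subgroup of `ℤ × ℤ`. -/
def lattice (U : Subgroup Q) : AddSubgroup (ℤ × ℤ) :=
  Subgroup.toAddSubgroup' (U.comap inl)

lemma mem_lattice {U : Subgroup Q} {x : ℤ × ℤ} : x ∈ lattice U ↔ ιQ x ∈ U := Iff.rfl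

def dihedralSubgroup (v : ℤ × ℤ) (A : AddSubgroup (ℤ × ℤ)) : Subgroup Q where
  carrier := {q | ∃ x ∈ A, q = ιQ x ∨ q = halfTurn (v - x)}
  one_mem' := ⟨0, A.zero_mem, Or.inl ιQ_zero.symm⟩
  mul_mem' := by
    rintro _ _ ⟨x, hx, rfl | rfl⟩ ⟨y, hy, rfl | rfl⟩
    · exact ⟨x + y, add_mem hx hy, Or.inl (ιQ_add x y).symm⟩
    · exact ⟨y - x, sub_mem hy hx, Or.inr (by rw [ιQ_mul_halfTurn]; abel_nf)⟩
    · exact ⟨x + y, add_mem hx hy, Or.inr (by rw [halfTurn_mul_ιQ]; abel_nf)⟩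
    · exact ⟨y - x, sub_mem hy hx, Or.inl (by rw [halfTurn_mul_halfTurn]; abel_nf)⟩
  inv_mem' := by
    rintro _ ⟨x, hx, rfl | rfl⟩
    · exact ⟨-x, neg_mem hx, Or.inl (ιQ_neg x).symm⟩
    · exact ⟨x, hx, Or.inr (halfTurn_inv _)⟩

section DihedralSubgroup

variable {v : ℤ × ℤ} {A B : AddSubgroup (ℤ × ℤ)}

lemma ιQ_mem_dihedralSubgroup {x : ℤ × ℤ} : ιQ x ∈ dihedralSubgroup v A ↔ x ∈ A := by
  refine ⟨?_, fun hx => ⟨x, hx, Or.inl rfl⟩⟩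
  rintro ⟨y, hy, h | h⟩
  · rwa [ιQ_injective h]
  · exact absurd h (ιQ_ne_halfTurn _ _)

lemma halfTurn_mem_dihedralSubgroup {w : ℤ × ℤ} :
    halfTurn w ∈ dihedralSubgroup v A ↔ v - w ∈ A := by
  refine ⟨?_, fun hw => ⟨v - w, hw, Or.inr (by rw [sub_sub_cancel])⟩⟩
  rintro ⟨y, hy, h | h⟩
  · exact absurd h.symm (ιQ_ne_halfTurn _ _)
  · rwa [halfTurn_injective h, sub_sub_cancel]

lemma dihedralSubgroup_mono (h : A ≤ B) : dihedralSubgroup v A ≤ dihedralSubgroup v B :=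
  fun _ ⟨x, hx, hq⟩ => ⟨x, h hx, hq⟩

lemma dihedralSubgroup_eq_closure {w : ℤ × ℤ} (hw : halfTurn w ∈ dihedralSubgroup v A) :
    dihedralSubgroup v A = Subgroup.closure (insert (halfTurn w) (ιQ '' A)) := by
  have hιQ : ∀ x ∈ A, ιQ x ∈ Subgroup.closure (insert (halfTurn w) (ιQ '' A)) :=
    fun x hx => Subgroup.subset_closure (Set.mem_insert_of_mem _ ⟨x, hx, rfl⟩)
  refine le_antisymm ?_ ?_
  · rintro _ ⟨x, hx, rfl | rfl⟩
    · exact hιQ x hx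
    · have hvw := halfTurn_mem_dihedralSubgroup.mp hw
      rw [← sub_add_cancel (v - x) w, ← ιQ_mul_halfTurn, sub_right_comm]
      exact mul_mem (hιQ _ (sub_mem hvw hx)) (Subgroup.subset_closure (Set.mem_insert _ _))
  · rw [Subgroup.closure_le, Set.insert_subset_iff]
    refine ⟨hw, ?_⟩
    rintro _ ⟨x, hx, rfl⟩
    exact ιQ_mem_dihedralSubgroup.mpr hx

end DihedralSubgroup

def dihedralHom (v c : ℤ × ℤ) : DihedralGroup 0 →* Q where
  toFun
    | r i => ιQ (ZMod.castHom (dvd_refl 0) ℤ i • c)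
    | sr i => halfTurn (v - ZMod.castHom (dvd_refl 0) ℤ i • c)
  map_one' := by rw [one_def]; simp [ιQ_zero]
  map_mul' := by
    rintro (i | i) (j | j) <;>
      simp only [r_mul_r, r_mul_sr, sr_mul_r, sr_mul_sr, ιQ_mul_halfTurn, halfTurn_mul_ιQ,
        halfTurn_mul_halfTurn, ← ιQ_add, map_add, map_sub, add_smul, sub_smul] <;> abel_nf

lemma range_dihedralHom (v c : ℤ × ℤ) :
    (dihedralHom v c).range = dihedralSubgroup v (AddSubgroup.zmultiples c) := by
  ext q
  constructor
  · rintro ⟨i | i, rfl⟩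
    · exact ⟨_, AddSubgroup.zsmul_mem_zmultiples _ _, Or.inl rfl⟩
    · exact ⟨_, AddSubgroup.zsmul_mem_zmultiples _ _, Or.inr rfl⟩
  · rintro ⟨_, ⟨k, rfl⟩, rfl | rfl⟩
    · exact ⟨r k, rfl⟩
    · exact ⟨sr k, rfl⟩

lemma dihedralHom_injective (v : ℤ × ℤ) {c : ℤ × ℤ} (hc : c ≠ 0) :
    Function.Injective (dihedralHom v c) := by
  have hκ := ZMod.castHom_injective (n := 0) ℤ
  have hsmul := smul_left_injective ℤ hc
  rintro (i | i) (j | j) h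
  · exact congrArg r (hκ (hsmul (ιQ_injective h)))
  · exact absurd h (ιQ_ne_halfTurn _ _)
  · exact absurd h.symm (ιQ_ne_halfTurn _ _)
  · exact congrArg sr (hκ (hsmul (sub_right_injective (halfTurn_injective h))))

lemma AddSubgroup.PairwiseDependent.nonempty_mulEquiv_dihedralGroup {A : AddSubgroup (ℤ × ℤ)}
    (hA : PairwiseDependent A) {c : ℤ × ℤ} (hcA : c ∈ A) (hc : c ≠ 0) (v : ℤ × ℤ) :
    Nonempty (dihedralSubgroup v A ≃* DihedralGroup 0) := by
  obtain ⟨d, rfl⟩ := hA.exists_zmultiples_eq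
  have hd : d ≠ 0 := by
    rintro rfl
    rw [AddSubgroup.zmultiples_zero_eq_bot, AddSubgroup.mem_bot] at hcA
    exact hc hcA
  exact ⟨(MulEquiv.subgroupCongr (range_dihedralHom v d)).symm.trans
    (MonoidHom.ofInjective (dihedralHom_injective v hd)).symm⟩

section Lattice

variable {U : Subgroup Q}

lemma AddSubgroup.PairwiseDependent.eq_ιQ_or_eq_halfTurn (hU : PairwiseDependent (lattice U)) {c : ℤ × ℤ}
    (hcU : c ∈ lattice U) (hc : c ≠ 0) {q : Q} (hq : q ∈ U) :
    (∃ x, q = ιQ x) ∨ ∃ w, q = halfTurn w := by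
  obtain ⟨x, s⟩ := q
  -- conjugating by an element with rotation part `t` or `t³` sends `c` to `±J c`
  have hconj : inl (phiQ s (Multiplicative.ofAdd c)) ∈ U := by
    rw [← mul_ιQ_mul_inv ⟨x, s⟩]; exact U.mul_mem (U.mul_mem hq hcU) (U.inv_mem hq)
  have hs : ∀ t : ZMod 4, t = 0 ∨ t = 1 ∨ t = 2 ∨ t = 3 := by decide
  obtain hs | hs | hs | hs := hs (Multiplicative.toAdd s) <;>
    rw [← ofAdd_toAdd s, hs] at hconj ⊢
  · exact Or.inl ⟨Multiplicative.toAdd x, rfl⟩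
  · rw [phiQ_one_apply] at hconj
    exact absurd hconj (hU.J_notMem hcU hc)
  · exact Or.inr ⟨Multiplicative.toAdd x, rfl⟩
  · rw [phiQ_three_apply] at hconj
    exact absurd (neg_neg (J c) ▸ neg_mem hconj) (hU.J_notMem hcU hc)

lemma AddSubgroup.PairwiseDependent.eq_dihedralSubgroup (hU : PairwiseDependent (lattice U)) {c : ℤ × ℤ}
    (hcU : c ∈ lattice U) (hc : c ≠ 0) {v : ℤ × ℤ} (hv : halfTurn v ∈ U) :
    U = dihedralSubgroup v (lattice U) := by
  ext q
  constructor
  · intro hq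
    obtain ⟨x, rfl⟩ | ⟨w, rfl⟩ := hU.eq_ιQ_or_eq_halfTurn hcU hc hq
    · exact ⟨x, hq, Or.inl rfl⟩
    · refine halfTurn_mem_dihedralSubgroup.mpr (mem_lattice.mpr ?_)
      rw [← halfTurn_mul_halfTurn]
      exact U.mul_mem hv hq
  · rintro ⟨x, hx, rfl | rfl⟩
    · exact hx
    · rw [← halfTurn_mul_ιQ]
      exact U.mul_mem hv hx

lemma AddSubgroup.PairwiseDependent.exists_eq_halfTurn_of_orderOf_eq_two (hU : PairwiseDependent (lattice U))
    {c : ℤ × ℤ} (hcU : c ∈ lattice U) (hc : c ≠ 0) {q : Q} (hq : q ∈ U) (h2 : orderOf q = 2) :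
    ∃ w, q = halfTurn w := by
  refine (hU.eq_ιQ_or_eq_halfTurn hcU hc hq).resolve_left ?_
  rintro ⟨x, rfl⟩
  have : orderOf (ιQ x) = addOrderOf x := by
    rw [ιQ, orderOf_injective _ inl_injective, orderOf_ofAdd_eq_addOrderOf]
  have := IsAddTorsionFree.addOrderOf_nonpos x
  omega

lemma pairwiseDependent_lattice (hU : VirtuallyCyclic U) : PairwiseDependent (lattice U) := by
  obtain ⟨g, hg⟩ := hU.exists_forall_pow_mem_zpowers
  have hpow : ∀ x ∈ lattice U, ∃ n : ℤ, n ≠ 0 ∧ ∃ k : ℤ, ιQ (n • x) = (g : Q) ^ k := by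
    intro x hx
    obtain ⟨n, hn, k, hk⟩ := hg ⟨ιQ x, hx⟩
    refine ⟨n, by exact_mod_cast hn.ne', k, ?_⟩
    rw [ιQ_zsmul, zpow_natCast]
    exact congrArg Subtype.val hk.symm
  intro a ha b hb hb0
  obtain ⟨n, hn, k, hk⟩ := hpow a ha
  obtain ⟨m, hm, l, hl⟩ := hpow b hb
  have hl0 : l ≠ 0 := by
    rintro rfl
    rw [zpow_zero, ← ιQ_zero] at hl
    exact smul_ne_zero hm hb0 (ιQ_injective hl)
  refine ⟨k * m, l * n, mul_ne_zero hl0 hn, ιQ_injective ?_⟩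
  rw [mul_smul, mul_smul, ιQ_zsmul l, ιQ_zsmul k, hk, hl, ← zpow_mul, ← zpow_mul, mul_comm]

lemma exists_mem_lattice_ne_zero [Infinite U] : ∃ c ∈ lattice U, c ≠ 0 := by
  by_contra! h
  have hinj : Function.Injective ((rightHom : Q →* _).comp U.subtype) := by
    refine (injective_iff_map_eq_one _).mpr fun u hu => ?_
    obtain ⟨y, hy⟩ : (u : Q) ∈ (inl : Z2 →* Q).range := by
      rw [range_inl_eq_ker_rightHom]; exact hu
    have hyU : Multiplicative.toAdd y ∈ lattice U := by
      rw [mem_lattice, ιQ, ofAdd_toAdd, hy]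
      exact u.2
    rw [← Subtype.coe_inj, ← hy, ← ofAdd_toAdd y, h _ hyU]
    rfl
  exact (Finite.of_injective _ hinj).false

lemma VirtuallyCyclic.nonempty_mulEquiv_dihedralGroup_and_le {U V : Subgroup Q}
    (hU : VirtuallyCyclic U) (hVU : V ≤ U) {c : ℤ × ℤ} (hcV : c ∈ lattice V) (hc : c ≠ 0)
    {v : ℤ × ℤ} (hv : halfTurn v ∈ V) :
    Nonempty (U ≃* DihedralGroup 0) ∧ U ≤ dihedralSubgroup v (saturation (lattice V)) := by
  have hU := pairwiseDependent_lattice hU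
  have hcU : c ∈ lattice U := hVU hcV
  rw [hU.eq_dihedralSubgroup hcU hc (hVU hv)]
  exact ⟨hU.nonempty_mulEquiv_dihedralGroup hcU hc v,
    dihedralSubgroup_mono (hU.le_saturation hcU hcV hc)⟩

/-- For every infinite dihedral subgroup `V` of `Q = ℤ² ⋊ ℤ/4` there is a subgroup
`V_max = ⟨v₂, (V ∩ ℤ²)_max⟩`, independent of the choice of the order-two element `v₂ ∈ V`,
which is infinite dihedral, contains `V`, is a maximal virtually cyclic subgroup, and
contains every virtually cyclic subgroup `W ⊇ V` (all of which are infinite dihedral). -/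
theorem stmt_19 :
    ∀ V : Subgroup Q, Nonempty (V ≃* DihedralGroup 0) →
      ∃ W : Subgroup Q,
        Nonempty (W ≃* DihedralGroup 0) ∧
        V ≤ W ∧
        (∀ v₂ ∈ V, orderOf v₂ = 2 →
          W = Subgroup.closure
            (insert v₂
              {q : Q | ∃ x : ℤ × ℤ, q = ιQ x ∧ ∃ n : ℤ, n ≠ 0 ∧ ιQ (n • x) ∈ V})) ∧
        (∀ U : Subgroup Q, VirtuallyCyclic U → W ≤ U → W = U) ∧
        (∀ U : Subgroup Q, VirtuallyCyclic U → V ≤ U →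
          Nonempty (U ≃* DihedralGroup 0) ∧ U ≤ W) := by
  rintro V ⟨e⟩
  have hV := pairwiseDependent_lattice (virtuallyCyclic_dihedralGroup_zero.of_mulEquiv e.symm)
  have : Infinite V := Infinite.of_injective e.symm e.symm.injective
  obtain ⟨c, hcV, hc⟩ := exists_mem_lattice_ne_zero (U := V)
  obtain ⟨v, hv⟩ : ∃ v, halfTurn v ∈ V := by
    obtain ⟨v, hv⟩ := hV.exists_eq_halfTurn_of_orderOf_eq_two hcV hc (e.symm (sr 0)).2
      (by rw [Subgroup.orderOf_coe, MulEquiv.orderOf_eq, orderOf_sr])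
    exact ⟨v, hv ▸ (e.symm (sr 0)).2⟩
  have hVW : V ≤ dihedralSubgroup v (saturation (lattice V)) :=
    (hV.eq_dihedralSubgroup hcV hc hv).le.trans (dihedralSubgroup_mono (le_saturation _))
  refine ⟨_, hV.saturation.nonempty_mulEquiv_dihedralGroup (le_saturation _ hcV) hc v, hVW,
    fun v₂ hv₂ h2 => ?_,
    fun U hU hWU => le_antisymm hWU (hU.nonempty_mulEquiv_dihedralGroup_and_le
      (hVW.trans hWU) hcV hc hv).2,
    fun U hU hVU => hU.nonempty_mulEquiv_dihedralGroup_and_le hVU hcV hc hv⟩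
  obtain ⟨w, rfl⟩ := hV.exists_eq_halfTurn_of_orderOf_eq_two hcV hc hv₂ h2
  rw [dihedralSubgroup_eq_closure (hVW hv₂)]
  congr 2
  ext q
  exact ⟨fun ⟨x, hx, hq⟩ => ⟨x, hq.symm, hx⟩, fun ⟨x, hq, hx⟩ => ⟨x, hx, hq.symm⟩⟩
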